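/- arXiv:1108.4178 — 2 statements merged into one kernel-verified Lean document; each statement's English description precedes it below -/
import Mathlib

section
/- For any prime p ≥ 5 and any positive integer n ≤ p-3, the sum R_n(p) = ∑_{k=1}^{p-1} 1/k^n satisfies R_n(p) ≡ 0 (mod p²) if n is odd, and R_n(p) ≡ 0 (mod p) if n is even. -/
/-! For `k` prime to `p`, `1 / k ^ n` is a `p`-adic integer, so the congruence modulo `p ^ m` is the
vanishing of `∑ k⁻¹ ^ n` in `ZMod (p ^ m)`. Modulo `p` this is the vanishing of the power sum
`∑ x ^ n` over `𝔽_p` for `0 < n < p - 1`. Modulo `p²`, the pairing `k ↔ p - k` together with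
`(p - k)⁻¹ = -(k⁻¹ + p k⁻²)` shows that for odd `n` twice the sum equals `-n p ∑ k⁻¹ ^ (n + 1)`,
which vanishes because the last sum is `0` modulo `p`. -/

/-- `a ≡ b (mod p^n)` in the `p`-adic sense for rationals. -/
def PadicCong (p : ℕ) (n : ℕ) (a b : ℚ) : Prop :=
  padicNorm p (a - b) ≤ (p : ℚ) ^ (-(n : ℤ))

open Finset

theorem add_pow_of_sq_eq_zero {R : Type*} [CommRing R] (x : R) {y : R} (hy : y ^ 2 = 0) (n : ℕ) :
    (x + y) ^ (n + 1) = x ^ (n + 1) + (n + 1) * x ^ n * y := by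
  simpa using Polynomial.eval_add_of_sq_eq_zero (Polynomial.X ^ (n + 1)) x y hy

theorem Finset.sum_Icc_one_sub_reflect {M : Type*} [AddCommMonoid M] (f : ℕ → M) (p : ℕ) :
    ∑ k ∈ Icc 1 (p - 1), f (p - k) = ∑ k ∈ Icc 1 (p - 1), f k := by
  rcases p with _ | p
  · simp
  · rw [Nat.add_sub_cancel, ← Ico_add_one_right_eq_Icc, sum_Ico_reflect f 1 (Nat.le_succ _)]
    simp

theorem ZMod.sum_Icc_natCast_eq_sum_univ {M : Type*} [AddCommMonoid M] (p : ℕ) [NeZero p]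
    (f : ZMod p → M) (hf : f 0 = 0) :
    ∑ k ∈ Icc 1 (p - 1), f k = ∑ x : ZMod p, f x := by
  rw [← sum_erase univ hf]
  refine sum_nbij' (fun k => (k : ZMod p)) ZMod.val ?_ ?_ ?_ ?_ fun _ _ => rfl
  · intro k hk
    simp only [mem_Icc] at hk
    simp only [mem_erase, mem_univ, and_true, ne_eq, ZMod.natCast_eq_zero_iff]
    exact fun h => absurd (Nat.le_of_dvd (by omega) h) (by omega)
  · intro x hx
    have := x.val_lt
    have := (ZMod.val_ne_zero x).mpr (ne_of_mem_erase hx)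
    simp only [mem_Icc]
    omega
  · intro k hk
    simp only [mem_Icc] at hk
    exact ZMod.val_cast_of_lt (by omega)
  · intro x _
    exact ZMod.natCast_zmod_val x

theorem ZMod.sum_Icc_inv_pow_eq_zero {p : ℕ} [Fact p.Prime] {n : ℕ} (hn : n ≠ 0)
    (hnp : n < p - 1) : ∑ k ∈ Icc 1 (p - 1), ((k : ZMod p)⁻¹) ^ n = 0 := by
  rw [ZMod.sum_Icc_natCast_eq_sum_univ p (fun x => x⁻¹ ^ n) (by simp [hn]),
    Fintype.sum_bijective _ inv_involutive.bijective _ (fun x => x ^ n) fun _ => rfl]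
  exact FiniteField.sum_pow_lt_card_sub_one (K := ZMod p) n (by rwa [ZMod.card])

theorem ZMod.natCast_mul_eq_zero_iff_castHom {p : ℕ} [NeZero p] (x : ZMod (p ^ 2)) :
    (p : ZMod (p ^ 2)) * x = 0 ↔ ZMod.castHom (dvd_pow_self p two_ne_zero) (ZMod p) x = 0 := by
  rw [← ZMod.natCast_zmod_val x, map_natCast, ← Nat.cast_mul, ZMod.natCast_eq_zero_iff,
    ZMod.natCast_eq_zero_iff]
  have := Nat.mul_dvd_mul_iff_left (b := p) (c := x.val) (NeZero.pos p)
  rwa [← pow_two] at this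

theorem ZMod.castHom_inv_natCast {m N : ℕ} (h : m ∣ N) {k : ℕ} (hk : k.Coprime N) :
    ZMod.castHom h (ZMod m) (k : ZMod N)⁻¹ = (k : ZMod m)⁻¹ := by
  refine (ZMod.inv_eq_of_mul_eq_one _ _ _ ?_).symm
  rw [← map_natCast (ZMod.castHom h (ZMod m)), ← map_mul, ZMod.coe_mul_inv_eq_one k hk, map_one]

theorem ZMod.inv_natCast_sub_natCast {p k : ℕ} (hk : k.Coprime (p ^ 2)) :
    ((p : ZMod (p ^ 2)) - k)⁻¹ = -((k : ZMod (p ^ 2))⁻¹ + p * (k : ZMod (p ^ 2))⁻¹ ^ 2) := by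
  have hp : (p : ZMod (p ^ 2)) ^ 2 = 0 := by rw [← Nat.cast_pow, ZMod.natCast_self]
  have hkk := ZMod.coe_mul_inv_eq_one k hk
  refine ZMod.inv_eq_of_mul_eq_one _ _ _ ?_
  linear_combination (1 + p * (k : ZMod (p ^ 2))⁻¹) * hkk - (k : ZMod (p ^ 2))⁻¹ ^ 2 * hp

theorem ZMod.sum_Icc_inv_pow_eq_zero_of_odd {p : ℕ} [Fact p.Prime] {n : ℕ} (hn : Odd n)
    (hnp : n + 1 < p - 1) : ∑ k ∈ Icc 1 (p - 1), ((k : ZMod (p ^ 2))⁻¹) ^ n = 0 := by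
  have hp := (Fact.out : p.Prime)
  have hcop : ∀ k ∈ Icc 1 (p - 1), k.Coprime (p ^ 2) := fun k hk => by
    simp only [mem_Icc] at hk
    exact (Nat.coprime_of_lt_prime (by omega) (by omega) hp).symm.pow_right 2
  set T := ∑ k ∈ Icc 1 (p - 1), ((k : ZMod (p ^ 2))⁻¹) ^ n with hTdef
  set U := ∑ k ∈ Icc 1 (p - 1), ((k : ZMod (p ^ 2))⁻¹) ^ (n + 1)
  have hpU : (p : ZMod (p ^ 2)) * U = 0 := by
    rw [ZMod.natCast_mul_eq_zero_iff_castHom, map_sum,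
      ← ZMod.sum_Icc_inv_pow_eq_zero (p := p) n.succ_ne_zero hnp]
    exact sum_congr rfl fun k hk => by rw [map_pow, ZMod.castHom_inv_natCast _ (hcop k hk)]
  obtain ⟨m, rfl⟩ : ∃ m, n = m + 1 := ⟨n - 1, by have := hn.pos; omega⟩
  have hpair : ∀ k ∈ Icc 1 (p - 1), ((p - k : ℕ) : ZMod (p ^ 2))⁻¹ ^ (m + 1) =
      -((k : ZMod (p ^ 2))⁻¹ ^ (m + 1) + (m + 1) * p * (k : ZMod (p ^ 2))⁻¹ ^ (m + 2)) := by
    intro k hk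
    have hsq : ((p : ZMod (p ^ 2)) * (k : ZMod (p ^ 2))⁻¹ ^ 2) ^ 2 = 0 := by
      rw [mul_pow, ← Nat.cast_pow, ZMod.natCast_self, zero_mul]
    rw [Nat.cast_sub (by simp only [mem_Icc] at hk; omega),
      ZMod.inv_natCast_sub_natCast (hcop k hk), hn.neg_pow, add_pow_of_sq_eq_zero _ hsq]
    ring
  have hT : T = -(T + (m + 1) * (p * U)) := by
    conv_lhs => rw [hTdef, ← sum_Icc_one_sub_reflect]
    rw [sum_congr rfl hpair, sum_neg_distrib, sum_add_distrib, mul_sum, mul_sum]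
    simp only [mul_assoc]
    rfl
  have h2 : IsUnit (2 : ZMod (p ^ 2)) := by
    have := (ZMod.isUnit_iff_coprime 2 (p ^ 2)).mpr
      ((Nat.coprime_two_left.mpr (hp.odd_of_ne_two (by omega))).pow_right 2)
    exact_mod_cast this
  rw [hpU, mul_zero, add_zero] at hT
  exact h2.mul_right_eq_zero.mp (by linear_combination hT)

theorem PadicInt.norm_le_pow_iff_toZModPow_eq_zero {p : ℕ} [Fact p.Prime] (x : ℤ_[p]) (m : ℕ) :
    ‖x‖ ≤ (p : ℝ) ^ (-m : ℤ) ↔ PadicInt.toZModPow m x = 0 := by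
  rw [PadicInt.norm_le_pow_iff_mem_span_pow, ← PadicInt.ker_toZModPow, RingHom.mem_ker]

theorem padicNorm_sum_one_div_pow_le_iff {p : ℕ} [Fact p.Prime] {s : Finset ℕ}
    (hs : ∀ k ∈ s, p.Coprime k) (n m : ℕ) :
    padicNorm p (∑ k ∈ s, 1 / (k : ℚ) ^ n) ≤ (p : ℚ) ^ (-(m : ℤ)) ↔
      ∑ k ∈ s, ((k : ZMod (p ^ m))⁻¹) ^ n = 0 := by
  have hunit : ∀ k ∈ s, IsUnit (k : ℤ_[p]) := fun k hk =>
    PadicInt.isUnit_iff.mpr (PadicInt.norm_natCast_eq_one_iff.mpr (hs k hk))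
  choose! v hv using fun k hk => (hunit k hk).exists_right_inv
  set y : ℤ_[p] := ∑ k ∈ s, v k ^ n
  have hQ : (y : ℚ_[p]) = ((∑ k ∈ s, 1 / (k : ℚ) ^ n : ℚ) : ℚ_[p]) := by
    simp only [y, PadicInt.coe_sum, PadicInt.coe_pow, Rat.cast_sum, Rat.cast_div, Rat.cast_one,
      Rat.cast_pow, Rat.cast_natCast]
    refine sum_congr rfl fun k hk => ?_
    rw [one_div, ← inv_pow]
    congr 1
    exact eq_inv_of_mul_eq_one_right (by exact_mod_cast congrArg ((↑) : ℤ_[p] → ℚ_[p]) (hv k hk))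
  have hZ : PadicInt.toZModPow m y = ∑ k ∈ s, ((k : ZMod (p ^ m))⁻¹) ^ n := by
    simp only [y, map_sum, map_pow]
    refine sum_congr rfl fun k hk => ?_
    congr 1
    refine (ZMod.inv_eq_of_mul_eq_one _ _ _ ?_).symm
    rw [← map_natCast (PadicInt.toZModPow m), ← map_mul, hv k hk, map_one]
  rw [← hZ, ← PadicInt.norm_le_pow_iff_toZModPow_eq_zero, PadicInt.norm_def, hQ,
    Padic.eq_padicNorm, ← Rat.cast_le (K := ℝ), Rat.cast_zpow, Rat.cast_natCast]

theorem stmt6_general (p : ℕ) (hp : p.Prime) (n : ℕ) (hn : 1 ≤ n)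
    (hnp : n ≤ p - 3) :
    (Odd n → PadicCong p 2 (∑ k ∈ Finset.Icc 1 (p - 1), (1 : ℚ) / (k : ℚ) ^ n) 0) ∧
    (Even n → PadicCong p 1 (∑ k ∈ Finset.Icc 1 (p - 1), (1 : ℚ) / (k : ℚ) ^ n) 0) := by
  have : Fact p.Prime := ⟨hp⟩
  have hcop : ∀ k ∈ Icc 1 (p - 1), p.Coprime k := fun k hk => by
    simp only [mem_Icc] at hk
    exact Nat.coprime_of_lt_prime (by omega) (by omega) hp
  simp only [PadicCong, sub_zero, padicNorm_sum_one_div_pow_le_iff hcop]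
  refine ⟨fun hodd => ZMod.sum_Icc_inv_pow_eq_zero_of_odd hodd (by omega), fun _ => ?_⟩
  rw [pow_one]
  exact ZMod.sum_Icc_inv_pow_eq_zero (by omega) (by omega)

theorem stmt6 (p : ℕ) (hp : p.Prime) (h5 : 5 ≤ p) (n : ℕ) (hn : 1 ≤ n)
    (hnp : n ≤ p - 3) :
    (Odd n → PadicCong p 2 (∑ k ∈ Finset.Icc 1 (p - 1), (1 : ℚ) / (k : ℚ) ^ n) 0) ∧
    (Even n → PadicCong p 1 (∑ k ∈ Finset.Icc 1 (p - 1), (1 : ℚ) / (k : ℚ) ^ n) 0) :=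
  stmt6_general p hp n hn hnp
end

section
/- Let p be a Wolstenholme prime. Then C(2p-1, p-1) ≡ 1 + 2p·∑_{k=1}^{p-1} 1/k + (2p³/3)·∑_{k=1}^{p-1} 1/k³ (mod p⁷). -/
open Finset

def PadicDvd (p n : ℕ) (x : ℚ) : Prop :=
  padicNorm p x ≤ (p : ℚ) ^ (-(n : ℤ))

theorem padicCong_iff {p n : ℕ} {a b : ℚ} : PadicCong p n a b ↔ PadicDvd p n (a - b) :=
  Iff.rfl

theorem padicNorm_natCast_eq_one {p k : ℕ} [Fact p.Prime] (hk : 0 < k) (hkp : k < p) :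
    padicNorm p k = 1 :=
  (padicNorm.nat_eq_one_iff k).2 (Nat.not_dvd_of_pos_of_lt hk hkp)

theorem ZMod.sum_range_pow_eq_zero {p : ℕ} [Fact p.Prime] {t : ℕ} (ht : t < p - 1) :
    ∑ k ∈ range p, (k : ZMod p) ^ t = 0 := by
  rw [← FiniteField.sum_pow_lt_card_sub_one (ZMod p) t (by rwa [ZMod.card])]
  exact sum_nbij' (↑) ZMod.val (fun _ _ => mem_univ _) (fun x _ => mem_range.2 (ZMod.val_lt x))
    (fun k hk => ZMod.val_cast_of_lt (mem_range.1 hk)) (fun x _ => ZMod.natCast_zmod_val x)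
    (fun _ _ => rfl)

namespace PadicDvd

variable {p : ℕ} {m n : ℕ} {x y c : ℚ}

theorem zero_iff : PadicDvd p 0 x ↔ padicNorm p x ≤ 1 := by simp [PadicDvd]

theorem zero : PadicDvd p n 0 := by
  rw [PadicDvd, padicNorm.zero]; positivity

theorem of_padicNorm_eq_one (h : padicNorm p x = 1) : PadicDvd p 0 x := zero_iff.2 h.le

theorem neg (hx : PadicDvd p n x) : PadicDvd p n (-x) := by rwa [PadicDvd, padicNorm.neg]

variable [hp : Fact p.Prime]

theorem intCast_iff (z : ℤ) : PadicDvd p n z ↔ (p : ℤ) ^ n ∣ z := by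
  rw [PadicDvd, ← padicNorm.dvd_iff_norm_le, Nat.cast_pow]

theorem natCast_iff (N : ℕ) : PadicDvd p n N ↔ p ^ n ∣ N := by
  rw [← Int.natCast_dvd_natCast, Int.natCast_pow, ← intCast_iff, Int.cast_natCast]

theorem natCast (N : ℕ) : PadicDvd p 0 N := zero_iff.2 (padicNorm.of_nat N)

theorem one : PadicDvd p 0 1 := by simpa using natCast (p := p) 1

theorem padicNorm_pow_self (n : ℕ) : padicNorm p ((p : ℚ) ^ n) = (p : ℚ) ^ (-(n : ℤ)) := by
  rw [IsAbsoluteValue.abv_pow (padicNorm p), padicNorm.padicNorm_p_of_prime, zpow_neg,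
    zpow_natCast, inv_pow]

theorem pow_self (n : ℕ) : PadicDvd p n ((p : ℚ) ^ n) := (padicNorm_pow_self n).le

theorem mono (h : m ≤ n) (hx : PadicDvd p n x) : PadicDvd p m x :=
  hx.trans (zpow_le_zpow_right₀ (by exact_mod_cast hp.out.one_lt.le) (by omega))

theorem add (hx : PadicDvd p n x) (hy : PadicDvd p n y) : PadicDvd p n (x + y) :=
  padicNorm.nonarchimedean.trans (max_le hx hy)

theorem sub (hx : PadicDvd p n x) (hy : PadicDvd p n y) : PadicDvd p n (x - y) :=
  padicNorm.sub.trans (max_le hx hy)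

theorem sum {ι : Type*} {s : Finset ι} {f : ι → ℚ} (h : ∀ i ∈ s, PadicDvd p n (f i)) :
    PadicDvd p n (∑ i ∈ s, f i) :=
  padicNorm.sum_le' h (by positivity)

theorem mul (hx : PadicDvd p m x) (hy : PadicDvd p n y) : PadicDvd p (m + n) (x * y) := by
  rw [PadicDvd, padicNorm.mul, Nat.cast_add, neg_add,
    zpow_add₀ (by exact_mod_cast hp.out.ne_zero)]
  exact mul_le_mul hx hy (padicNorm.nonneg _) (by positivity)

theorem pow (hx : PadicDvd p n x) (k : ℕ) : PadicDvd p (k * n) (x ^ k) := by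
  induction k with
  | zero => simpa using one
  | succ k ih => simpa [pow_succ, Nat.succ_mul] using ih.mul hx

theorem pow_sub_pow (hx : PadicDvd p 0 x) (hy : PadicDvd p 0 y) (h : PadicDvd p n (x - y))
    (j : ℕ) : PadicDvd p n (x ^ j - y ^ j) := by
  have hg : PadicDvd p 0 (∑ i ∈ range j, x ^ i * y ^ (j - 1 - i)) :=
    sum fun i _ => ((hx.pow i).mul (hy.pow _)).mono (Nat.zero_le _)
  rw [← geom_sum₂_mul]
  simpa using hg.mul h

theorem mul_left_iff (hc : padicNorm p c = 1) : PadicDvd p n (c * x) ↔ PadicDvd p n x := by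
  rw [PadicDvd, PadicDvd, padicNorm.mul, hc, one_mul]

theorem div_iff (hc : padicNorm p c = 1) : PadicDvd p n (x / c) ↔ PadicDvd p n x := by
  rw [PadicDvd, PadicDvd, padicNorm.div, hc, div_one]

theorem pow_mul_iff : PadicDvd p (m + n) ((p : ℚ) ^ m * x) ↔ PadicDvd p n x := by
  rw [PadicDvd, PadicDvd, padicNorm.mul, padicNorm_pow_self, Nat.cast_add, neg_add,
    zpow_add₀ (by exact_mod_cast hp.out.ne_zero),
    mul_le_mul_iff_right₀ (zpow_pos (by exact_mod_cast hp.out.pos) _)]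

theorem one_sub_pow_card_sub_one {k : ℕ} (hk : 0 < k) (hkp : k < p) :
    PadicDvd p 1 (1 - (k : ℚ) ^ (p - 1)) := by
  have hcop : IsCoprime (k : ℤ) p := Nat.isCoprime_iff_coprime.2 <| Nat.coprime_comm.1 <|
    (Nat.Prime.coprime_iff_not_dvd hp.out).2 (Nat.not_dvd_of_pos_of_lt hk hkp)
  have hcast : 1 - (k : ℚ) ^ (p - 1) = ((1 - (k : ℤ) ^ (p - 1) : ℤ) : ℚ) := by
    push_cast; rfl
  rw [hcast, intCast_iff, pow_one]
  exact (Int.ModEq.pow_card_sub_one_eq_one hp.out hcop).dvd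

theorem sum_Icc_pow {t : ℕ} (ht : 0 < t) (htp : t < p - 1) :
    PadicDvd p 1 (∑ k ∈ Icc 1 (p - 1), (k : ℚ) ^ t) := by
  have hrange : range p = insert 0 (Icc 1 (p - 1)) := by
    ext k; simp only [mem_range, mem_insert, mem_Icc]; omega
  have h := ZMod.sum_range_pow_eq_zero htp
  rw [hrange, sum_insert (by simp), Nat.cast_zero, zero_pow ht.ne', zero_add] at h
  have hcast :
      ∑ k ∈ Icc 1 (p - 1), (k : ℚ) ^ t = ((∑ k ∈ Icc 1 (p - 1), k ^ t : ℕ) : ℚ) := by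
    push_cast; rfl
  rw [hcast, natCast_iff, pow_one, ← ZMod.natCast_eq_zero_iff]
  push_cast
  exact h

end PadicDvd

section Truncation

variable {ι : Type*}

/-- The part of degree at most three of `∏ i ∈ s, (1 + f i)`, written through the power sums
by Newton's identities. -/
def prodOneAddTrunc (s : Finset ι) (f : ι → ℚ) : ℚ :=
  1 + ∑ i ∈ s, f i + ((∑ i ∈ s, f i) ^ 2 - ∑ i ∈ s, f i ^ 2) / 2 +
    ((∑ i ∈ s, f i) ^ 3 - 3 * (∑ i ∈ s, f i) * ∑ i ∈ s, f i ^ 2 +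
      2 * ∑ i ∈ s, f i ^ 3) / 6

namespace PadicDvd

variable {p : ℕ} [Fact p.Prime] {a : ℕ} {s : Finset ι} {f : ι → ℚ}

theorem prod_one_add_sub_one_add_sum (hf : ∀ i ∈ s, PadicDvd p a (f i)) :
    PadicDvd p (2 * a) (∏ i ∈ s, (1 + f i) - (1 + ∑ i ∈ s, f i)) := by
  classical
  induction s using Finset.induction_on with
  | empty => simpa using zero
  | insert b s hb ih =>
    rw [forall_mem_insert] at hf
    have key : ∏ i ∈ insert b s, (1 + f i) - (1 + ∑ i ∈ insert b s, f i) =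
        (1 + f b) * (∏ i ∈ s, (1 + f i) - (1 + ∑ i ∈ s, f i)) + f b * ∑ i ∈ s, f i := by
      rw [prod_insert hb, sum_insert hb]; ring
    rw [key]
    exact (((one.add (hf.1.mono (Nat.zero_le _))).mul (ih hf.2)).mono (by omega)).add
      ((hf.1.mul (sum hf.2)).mono (by omega))

theorem prod_one_add_sub_prodOneAddTrunc (h6 : ¬ p ∣ 6) (hf : ∀ i ∈ s, PadicDvd p a (f i)) :
    PadicDvd p (4 * a) (∏ i ∈ s, (1 + f i) - prodOneAddTrunc s f) := by
  classical
  replace h6 : padicNorm p 6 = 1 := by exact_mod_cast (padicNorm.nat_eq_one_iff 6).2 h6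
  induction s using Finset.induction_on with
  | empty => simpa [prodOneAddTrunc] using zero
  | insert b s hb ih =>
    rw [forall_mem_insert] at hf
    have hS (j : ℕ) : PadicDvd p (j * a) (∑ i ∈ s, f i ^ j) :=
      sum fun i hi => (hf.2 i hi).pow j
    have hS₁ : PadicDvd p a (∑ i ∈ s, f i) := by simpa using hS 1
    -- the third elementary symmetric function of the `f i`, `i ∈ s`
    set e₃ := ((∑ i ∈ s, f i) ^ 3 - 3 * (∑ i ∈ s, f i) * ∑ i ∈ s, f i ^ 2 +
      2 * ∑ i ∈ s, f i ^ 3) / 6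
    have he₃ : PadicDvd p (3 * a) e₃ := by
      refine (div_iff h6).2 (((hS₁.pow 3).sub ?_).add ?_)
      · exact (((natCast 3).mul hS₁).mul (hS 2)).mono (by omega)
      · exact ((natCast 2).mul (hS 3)).mono (by omega)
    have key : ∏ i ∈ insert b s, (1 + f i) - prodOneAddTrunc (insert b s) f =
        (1 + f b) * (∏ i ∈ s, (1 + f i) - prodOneAddTrunc s f) + f b * e₃ := by
      simp only [prodOneAddTrunc, prod_insert hb, sum_insert hb, e₃]; ring
    rw [key]
    exact (((one.add (hf.1.mono (Nat.zero_le _))).mul (ih hf.2)).mono (by omega)).add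
      ((hf.1.mul he₃).mono (by omega))

end PadicDvd

end Truncation

@[to_additive]
theorem Finset.prod_Icc_pairs {M R : Type*} [CommMonoid M] [AddCommGroupWithOne R] {n m : ℕ}
    (hn : n = 2 * m + 1) (φ : R → M) :
    ∏ k ∈ Icc 1 (n - 1), φ k = ∏ k ∈ Icc 1 m, φ k * φ (n - k) := by
  have hsplit : Icc 1 (n - 1) = Icc 1 m ∪ Icc (m + 1) (n - 1) := by
    ext k; simp only [mem_Icc, mem_union]; omega
  have hdisj : Disjoint (Icc 1 m) (Icc (m + 1) (n - 1)) :=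
    disjoint_left.2 fun k hk hk' => by simp only [mem_Icc] at hk hk'; omega
  rw [hsplit, prod_union hdisj, prod_mul_distrib]
  congr 1
  refine prod_nbij' (n - ·) (n - ·) ?_ ?_ ?_ ?_ ?_ <;> intro k hk <;> simp only [mem_Icc] at hk
  · simp only [mem_Icc]; omega
  · simp only [mem_Icc]; omega
  · omega
  · omega
  · rw [Nat.cast_sub (by omega), sub_sub_cancel]

theorem Nat.cast_add_choose_eq_prod {K : Type*} [Field K] [CharZero K] (n m : ℕ) :
    ((n + m).choose m : K) = ∏ k ∈ Icc 1 m, (n + k : K) / k := by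
  induction m with
  | zero => simp
  | succ m ih =>
    rw [← add_assoc, prod_Icc_succ_top (Nat.le_add_left 1 m), ← ih]
    have h := congrArg (Nat.cast : ℕ → K) (Nat.add_one_mul_choose_eq (n + m) m)
    push_cast at h ⊢
    field_simp
    linear_combination -h

/-- The factors `(n + k)/k` and `(n + (n - k))/(n - k)` multiply to `1 + 2n² pairInv n k`. -/
def pairInv (n : ℕ) (x : ℚ) : ℚ := 1 / (x * (n - x))

theorem pairInv_sub_self (n : ℕ) (x : ℚ) : pairInv n (n - x) = pairInv n x := by
  rw [pairInv, pairInv, sub_sub_cancel, mul_comm]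

section Pairing

variable {n m : ℕ} (hn : n = 2 * m + 1)
include hn

theorem natCast_ne_zero_and_sub_ne_zero {k : ℕ} (hk : k ∈ Icc 1 m) :
    (k : ℚ) ≠ 0 ∧ (n : ℚ) - k ≠ 0 := by
  rw [mem_Icc] at hk
  refine ⟨by exact_mod_cast (by omega : k ≠ 0), sub_ne_zero.2 ?_⟩
  exact_mod_cast (by omega : n ≠ k)

theorem cast_choose_eq_prod_one_add_pairInv :
    ((2 * n - 1).choose (n - 1) : ℚ) = ∏ k ∈ Icc 1 m, (1 + 2 * n ^ 2 * pairInv n k) := by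
  rw [show 2 * n - 1 = n + (n - 1) by omega, Nat.cast_add_choose_eq_prod,
    prod_Icc_pairs hn (fun x : ℚ => (n + x) / x)]
  refine prod_congr rfl fun k hk => ?_
  obtain ⟨hk0, hnk⟩ := natCast_ne_zero_and_sub_ne_zero hn hk
  rw [pairInv]
  field_simp
  ring

theorem sum_Icc_one_div_eq :
    ∑ k ∈ Icc 1 (n - 1), (1 : ℚ) / k = n * ∑ k ∈ Icc 1 m, pairInv n k := by
  rw [sum_Icc_pairs hn (fun x : ℚ => 1 / x), mul_sum]
  refine sum_congr rfl fun k hk => ?_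
  obtain ⟨hk0, hnk⟩ := natCast_ne_zero_and_sub_ne_zero hn hk
  rw [pairInv]
  field_simp
  ring

theorem sum_Icc_one_div_pow_three_eq :
    ∑ k ∈ Icc 1 (n - 1), (1 : ℚ) / k ^ 3 =
      n ^ 3 * ∑ k ∈ Icc 1 m, pairInv n k ^ 3 - 3 * n * ∑ k ∈ Icc 1 m, pairInv n k ^ 2 := by
  rw [sum_Icc_pairs hn (fun x : ℚ => 1 / x ^ 3), mul_sum, mul_sum, ← sum_sub_distrib]
  refine sum_congr rfl fun k hk => ?_
  obtain ⟨hk0, hnk⟩ := natCast_ne_zero_and_sub_ne_zero hn hk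
  rw [pairInv]
  field_simp
  ring

theorem sum_Icc_pairInv_pow_eq_two_mul (j : ℕ) :
    ∑ k ∈ Icc 1 (n - 1), pairInv n k ^ j = 2 * ∑ k ∈ Icc 1 m, pairInv n k ^ j := by
  rw [sum_Icc_pairs hn (fun x : ℚ => pairInv n x ^ j), mul_sum]
  simp only [pairInv_sub_self]
  exact sum_congr rfl fun _ _ => (two_mul _).symm

end Pairing

section Wolstenholme

variable {p m : ℕ} [hp : Fact p.Prime]

theorem padicDvd_pairInv {k : ℕ} (hk : 0 < k) (hkp : k < p) : PadicDvd p 0 (pairInv p k) := by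
  refine PadicDvd.of_padicNorm_eq_one ?_
  rw [pairInv, ← Nat.cast_sub hkp.le, padicNorm.div, padicNorm.one, padicNorm.mul,
    padicNorm_natCast_eq_one hk hkp, padicNorm_natCast_eq_one (by omega) (by omega)]
  norm_num

namespace PadicDvd

theorem pairInv_pow_sub {k : ℕ} (hk : 0 < k) (hkp : k < p) {j : ℕ} (hj : 2 * j ≤ p - 1) :
    PadicDvd p 1 (pairInv p k ^ j - (-1) ^ j * (k : ℚ) ^ (p - 1 - 2 * j)) := by
  have hk0 : (k : ℚ) ≠ 0 := by exact_mod_cast hk.ne'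
  have hpk : (p : ℚ) - k ≠ 0 := sub_ne_zero.2 (by exact_mod_cast hkp.ne')
  set u : ℚ := 1 / k
  have hu : PadicDvd p 0 u := of_padicNorm_eq_one <| by
    rw [padicNorm.div, padicNorm.one, padicNorm_natCast_eq_one hk hkp, div_one]
  have hq := padicDvd_pairInv hk hkp
  have hqu : PadicDvd p 1 (pairInv p k - -u ^ 2) := by
    have : pairInv p k - -u ^ 2 = p ^ 1 * (u * pairInv p k) := by
      simp only [u, pairInv]; field_simp; ring
    rw [this]
    exact ((pow_self 1).mul (hu.mul hq)).mono (by omega)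
  have hfermat : PadicDvd p 1 (u ^ (2 * j) - (k : ℚ) ^ (p - 1 - 2 * j)) := by
    have hinv : u ^ (2 * j) * (k : ℚ) ^ (2 * j) = 1 := by
      rw [← mul_pow, one_div_mul_cancel hk0, one_pow]
    have : u ^ (2 * j) - (k : ℚ) ^ (p - 1 - 2 * j) = u ^ (2 * j) * (1 - k ^ (p - 1)) := by
      rw [show (k : ℚ) ^ (p - 1) = k ^ (2 * j) * k ^ (p - 1 - 2 * j) by
        rw [← pow_add]; congr 1; omega]
      linear_combination (k : ℚ) ^ (p - 1 - 2 * j) * hinv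
    rw [this]
    exact ((hu.pow _).mul (one_sub_pow_card_sub_one hk hkp)).mono (by omega)
  have : pairInv p k ^ j - (-1) ^ j * (k : ℚ) ^ (p - 1 - 2 * j) = (pairInv p k ^ j - (-u ^ 2) ^ j) +
      (-1) ^ j * (u ^ (2 * j) - (k : ℚ) ^ (p - 1 - 2 * j)) := by
    ring
  rw [this]
  exact (pow_sub_pow hq (hu.pow 2).neg hqu j).add ((one.neg.pow j).mul hfermat |>.mono (by omega))

theorem sum_Icc_pairInv_pow {j : ℕ} (hj : 0 < j) (hjp : 2 * j + 1 < p) :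
    PadicDvd p 1 (∑ k ∈ Icc 1 (p - 1), pairInv p k ^ j) := by
  have : ∑ k ∈ Icc 1 (p - 1), pairInv p k ^ j =
      ∑ k ∈ Icc 1 (p - 1), (pairInv p k ^ j - (-1) ^ j * (k : ℚ) ^ (p - 1 - 2 * j)) +
        (-1) ^ j * ∑ k ∈ Icc 1 (p - 1), (k : ℚ) ^ (p - 1 - 2 * j) := by
    rw [mul_sum, ← sum_add_distrib]; simp
  rw [this]
  refine (sum fun k hk => ?_).add
    (((one.neg.pow j).mul (sum_Icc_pow (by omega) (by omega))).mono (by omega))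
  rw [mem_Icc] at hk
  exact pairInv_pow_sub (by omega) (by omega) (by omega)

theorem sum_Icc_half_pairInv_pow (hm : p = 2 * m + 1) {j : ℕ} (hj : 0 < j)
    (hjp : 2 * j + 1 < p) : PadicDvd p 1 (∑ k ∈ Icc 1 m, pairInv p k ^ j) := by
  have h2 : padicNorm p 2 = 1 := by
    exact_mod_cast padicNorm_natCast_eq_one (p := p) two_pos (by omega)
  rw [← mul_left_iff h2, ← sum_Icc_pairInv_pow_eq_two_mul hm]
  exact sum_Icc_pairInv_pow hj hjp

theorem two_mul_sq_mul_pairInv (hm : p = 2 * m + 1) :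
    ∀ k ∈ Icc 1 m, PadicDvd p 2 (2 * p ^ 2 * pairInv p k) := by
  intro k hk
  rw [mem_Icc] at hk
  simpa using ((natCast 2).mul (pow_self 2)).mul (padicDvd_pairInv (p := p) (k := k) (by omega)
    (by omega))

theorem sum_Icc_half_pairInv_of_wolstenholme (hm : p = 2 * m + 1)
    (hw : PadicCong p 4 ((2 * p - 1).choose (p - 1)) 1) :
    PadicDvd p 2 (∑ k ∈ Icc 1 m, pairInv p k) := by
  have h2 : padicNorm p 2 = 1 := by
    have := hp.out.two_le
    exact_mod_cast padicNorm_natCast_eq_one (p := p) two_pos (by omega)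
  have h := prod_one_add_sub_one_add_sum (two_mul_sq_mul_pairInv hm)
  rw [padicCong_iff, cast_choose_eq_prod_one_add_pairInv hm] at hw
  have := hw.sub h
  rw [sub_sub_sub_cancel_left, add_sub_cancel_left, ← mul_sum, mul_assoc, mul_left_iff h2] at this
  exact pow_mul_iff.1 this

theorem seven_of_power_sums (hp3 : p ≠ 3) {s₁ s₂ s₃ : ℚ} (hs₁ : PadicDvd p 2 s₁)
    (hs₂ : PadicDvd p 0 s₂) (hs₃ : PadicDvd p 1 s₃) :
    PadicDvd p 7 (2 * p ^ 4 * s₁ ^ 2 + 4 / 3 * p ^ 6 * s₁ ^ 3 - 4 * p ^ 6 * s₁ * s₂ +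
      2 * p ^ 6 * s₃) := by
  have h3 : padicNorm p 3 = 1 := by
    exact_mod_cast (padicNorm.nat_eq_one_iff 3).2 fun h =>
      hp3 ((Nat.prime_dvd_prime_iff_eq hp.out Nat.prime_three).1 h)
  rw [show 2 * (p : ℚ) ^ 4 * s₁ ^ 2 + 4 / 3 * p ^ 6 * s₁ ^ 3 - 4 * p ^ 6 * s₁ * s₂ +
      2 * p ^ 6 * s₃ =
      (6 * p ^ 4 * s₁ ^ 2 + 4 * p ^ 6 * s₁ ^ 3 - 12 * p ^ 6 * s₁ * s₂ + 6 * p ^ 6 * s₃) / 3 by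
      ring,
    div_iff h3]
  refine ((add ?_ ?_).sub ?_).add ?_
  · exact (((natCast 6).mul (pow_self 4)).mul (hs₁.pow 2)).mono (by norm_num)
  · exact (((natCast 4).mul (pow_self 6)).mul (hs₁.pow 3)).mono (by norm_num)
  · exact ((((natCast 12).mul (pow_self 6)).mul hs₁).mul hs₂).mono (by norm_num)
  · exact (((natCast 6).mul (pow_self 6)).mul hs₃).mono (by norm_num)

end PadicDvd

end Wolstenholme

theorem Nat.Prime.eleven_le_of_wolstenholme {p : ℕ} (hp : p.Prime)
    (hw : PadicCong p 4 ((2 * p - 1).choose (p - 1)) 1) : 11 ≤ p := by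
  have := Fact.mk hp
  have hcast : ((2 * p - 1).choose (p - 1) : ℚ) - 1 =
      (((2 * p - 1).choose (p - 1) - 1 : ℤ) : ℚ) := by
    push_cast; rfl
  rw [padicCong_iff, hcast, PadicDvd.intCast_iff] at hw
  by_contra! h
  -- `C(2p-1, p-1) - 1` is `2, 9, 5³, 5 * 7³` for `p = 2, 3, 5, 7`
  interval_cases p <;> revert hw <;> first | decide | exact absurd hp (by norm_num)

theorem stmt12 (p : ℕ) (hp : p.Prime)
    (hw : PadicCong p 4 ((Nat.choose (2 * p - 1) (p - 1)) : ℚ) 1) :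
    PadicCong p 7 ((Nat.choose (2 * p - 1) (p - 1)) : ℚ)
      (1 + 2 * (p : ℚ) * (∑ k ∈ Finset.Icc 1 (p - 1), (1 : ℚ) / (k : ℚ)) + 2 * (p : ℚ) ^ 3 / 3 * (∑ k ∈ Finset.Icc 1 (p - 1), (1 : ℚ) / (k : ℚ) ^ 3)) := by
  have := Fact.mk hp
  have hp11 := hp.eleven_le_of_wolstenholme hw
  obtain ⟨m, hm⟩ : Odd p := hp.odd_of_ne_two (by omega)
  have hs₁ := PadicDvd.sum_Icc_half_pairInv_of_wolstenholme hm hw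
  have hs₂ : PadicDvd p 0 (∑ k ∈ Icc 1 m, pairInv p k ^ 2) := PadicDvd.sum fun k hk => by
    rw [mem_Icc] at hk
    exact (padicDvd_pairInv (by omega) (by omega)).pow 2
  have hs₃ := PadicDvd.sum_Icc_half_pairInv_pow hm (j := 3) (by norm_num) (by omega)
  have htrunc := PadicDvd.prod_one_add_sub_prodOneAddTrunc
    (Nat.not_dvd_of_pos_of_lt (n := 6) (by norm_num) (by omega))
    (PadicDvd.two_mul_sq_mul_pairInv hm)
  simp only [prodOneAddTrunc, mul_pow, ← mul_sum] at htrunc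
  rw [padicCong_iff, cast_choose_eq_prod_one_add_pairInv hm, sum_Icc_one_div_eq hm,
    sum_Icc_one_div_pow_three_eq hm]
  convert (htrunc.mono (by norm_num)).add
    (PadicDvd.seven_of_power_sums (by omega) hs₁ hs₂ hs₃) using 1
  ring
end
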